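/- arXiv:1408.1179 — 10 statements merged into one kernel-verified Lean document; each statement's English description precedes it below -/
import Mathlib

section
/- Let p be an odd prime, let I' = {1, 2, …, p−1} be the set of nonzero residues modulo p and J = {0, 1, …, p−1} (all residues modulo p). Let λ and c be nonzero residues modulo p such that λc + 1 ≢ 0 (mod p). Define f : I' × J → I' × J by f(i, j) = ((λc+1)·i mod p, (c·i + j) mod p). Then f is a well-defined bijection of I' × J satisfying: (i) for every j and all i₁ ≠ i₂, the second coordinates differ, i.e. (c·i₁ + j) ≢ (c·i₂ + j) (mod p); (ii) (λc+1)·i ≢ i (mod p) for every (i, j) ∈ I' × J; and (iii) the function g(i, j) = (λj − i) mod p is a hopping invariant, i.e. g(f(i, j)) = g(i, j) for all (i, j) ∈ I' × J. -/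
/-- Hopping pattern with linear invariant on `I' × J` where `I'` is the set of
nonzero residues mod an odd prime `p` and `J = ZMod p`. -/
theorem stmt_0 (p : ℕ) [Fact p.Prime] (hp : Odd p)
    (lam c : ZMod p) (hlam : lam ≠ 0) (hc : c ≠ 0) (h1 : lam * c + 1 ≠ 0) :
    ∃ f : {i : ZMod p // i ≠ 0} × ZMod p → {i : ZMod p // i ≠ 0} × ZMod p,
      (∀ x, ((f x).1 : ZMod p) = (lam * c + 1) * (x.1 : ZMod p) ∧
        (f x).2 = c * (x.1 : ZMod p) + x.2) ∧
      Function.Bijective f ∧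
      (∀ (i₁ i₂ : {i : ZMod p // i ≠ 0}) (j : ZMod p), i₁ ≠ i₂ →
        c * (i₁ : ZMod p) + j ≠ c * (i₂ : ZMod p) + j) ∧
      (∀ x : {i : ZMod p // i ≠ 0} × ZMod p,
        (lam * c + 1) * (x.1 : ZMod p) ≠ (x.1 : ZMod p)) ∧
      (∀ x : {i : ZMod p // i ≠ 0} × ZMod p,
        lam * (f x).2 - ((f x).1 : ZMod p) = lam * x.2 - (x.1 : ZMod p)) := by
  refine ⟨fun x => (⟨(lam * c + 1) * (x.1 : ZMod p),
      mul_ne_zero h1 x.1.2⟩, c * (x.1 : ZMod p) + x.2), fun x => ⟨rfl, rfl⟩, ?_, ?_, ?_, ?_⟩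
  · constructor
    · rintro ⟨i₁, j₁⟩ ⟨i₂, j₂⟩ h
      simp only [Prod.mk.injEq, Subtype.ext_iff] at h ⊢
      have hi : (i₁ : ZMod p) = i₂ := by
        exact mul_left_cancel₀ h1 h.1
      exact ⟨hi, by have := h.2; rw [hi] at this; exact add_left_cancel this⟩
    · rintro ⟨i, j⟩
      refine ⟨(⟨(lam * c + 1)⁻¹ * i, mul_ne_zero (inv_ne_zero h1) i.2⟩,
        j - c * ((lam * c + 1)⁻¹ * (i : ZMod p))), ?_⟩
      simp only [Prod.mk.injEq, Subtype.ext_iff]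
      constructor
      · field_simp
      · ring
  · intro i₁ i₂ j hne h
    apply hne
    have := add_right_cancel h
    exact Subtype.ext (mul_left_cancel₀ hc this)
  · rintro ⟨i, j⟩ h
    have : (lam * c + 1 - 1) * (i : ZMod p) = 0 := by
      rw [sub_mul, h]; ring
    simp only [add_sub_cancel_right] at this
    rcases mul_eq_zero.1 this with h' | h'
    · exact hc (((mul_eq_zero.1 h').resolve_left hlam))
    · exact i.2 h'
  · rintro ⟨i, j⟩
    simp only
    ring
end

section
/- Let p be an odd prime and I = J = ℤ/pℤ. Let c and e be nonzero residues modulo p and f₀ an arbitrary residue modulo p. Define F : I × J → I × J by F(i, j) = ((i + e) mod p, (c·i + j + f₀) mod p). Then F is a bijection satisfying: (i) for every j and all i₁ ≠ i₂, (c·i₁ + j + f₀) ≢ (c·i₂ + j + f₀) (mod p); (ii) i + e ≢ i (mod p) for all (i, j); and (iii) the function Q(i, j) = (c·i² + (2f₀ − ce)·i − 2e·j) mod p is a hopping invariant, i.e. Q(F(i, j)) = Q(i, j) for all (i, j). -/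
/-- Type-B1-like hopping pattern on `(ZMod p) × (ZMod p)` for an odd prime `p`:
`F(i,j) = (i + e, c·i + j + f₀)` is a bijection satisfying the half-duplex
condition, the frequency-hopping condition, and admitting the quadratic hopping
invariant `Q(i,j) = c·i² + (2f₀ − ce)·i − 2e·j`. -/
theorem stmt_1 (p : ℕ) [Fact p.Prime] (hp : Odd p)
    (c e f₀ : ZMod p) (hc : c ≠ 0) (he : e ≠ 0) :
    Function.Bijective (fun x : ZMod p × ZMod p => (x.1 + e, c * x.1 + x.2 + f₀)) ∧
    (∀ i₁ i₂ j : ZMod p, i₁ ≠ i₂ → c * i₁ + j + f₀ ≠ c * i₂ + j + f₀) ∧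
    (∀ i j : ZMod p, i + e ≠ i) ∧
    (∀ i j : ZMod p,
      c * (i + e) ^ 2 + (2 * f₀ - c * e) * (i + e) - 2 * e * (c * i + j + f₀)
        = c * i ^ 2 + (2 * f₀ - c * e) * i - 2 * e * j) := by
  refine ⟨?_, ?_, ?_, ?_⟩
  · constructor
    · rintro ⟨a, b⟩ ⟨a', b'⟩ h
      simp only [Prod.mk.injEq] at h
      obtain ⟨h1, h2⟩ := h
      have ha : a = a' := by linear_combination h1
      subst ha
      have : b = b' := by linear_combination h2
      simp [this]
    · rintro ⟨a, b⟩
      exact ⟨(a - e, b - f₀ - c * (a - e)), by simp only [Prod.mk.injEq]; constructor <;> ring⟩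
  · intro i₁ i₂ j hne h
    apply hne
    have : c * (i₁ - i₂) = 0 := by linear_combination h
    rcases mul_eq_zero.mp this with h | h
    · exact absurd h hc
    · linear_combination h
  · intro i j h
    exact he (by linear_combination h)
  · intro i j; ring
end

section
/- Let p be an odd prime and I = J = ℤ/pℤ. Let c and e be nonzero residues modulo p and f₀ an arbitrary residue modulo p. Define F : I × J → I × J by F(i, j) = ((i + e) mod p, (c·i − j + f₀) mod p). Then F is a bijection satisfying: (i) for every j and all i₁ ≠ i₂, (c·i₁ − j + f₀) ≢ (c·i₂ − j + f₀) (mod p); (ii) i + e ≢ i (mod p) for all (i, j); and (iii) the function Q(i, j) = (c²·i² + 4j² − 4c·i·j + c(2f₀ − ce)·i + 2(ce − 2f₀)·j) mod p is a hopping invariant, i.e. Q(F(i, j)) = Q(i, j) for all (i, j). -/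
/-- Type-B2-like hopping pattern on `(ZMod p) × (ZMod p)` for an odd prime `p`:
`F(i,j) = (i + e, c·i − j + f₀)` is a bijection satisfying the half-duplex
condition, the frequency-hopping condition, and admitting the quadratic hopping
invariant `Q(i,j) = c²·i² + 4j² − 4c·i·j + c(2f₀ − ce)·i + 2(ce − 2f₀)·j`. -/
theorem stmt_2 (p : ℕ) [Fact p.Prime] (hp : Odd p)
    (c e f₀ : ZMod p) (hc : c ≠ 0) (he : e ≠ 0) :
    Function.Bijective (fun x : ZMod p × ZMod p => (x.1 + e, c * x.1 - x.2 + f₀)) ∧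
    (∀ i₁ i₂ j : ZMod p, i₁ ≠ i₂ → c * i₁ - j + f₀ ≠ c * i₂ - j + f₀) ∧
    (∀ i j : ZMod p, i + e ≠ i) ∧
    (∀ i j : ZMod p,
      c ^ 2 * (i + e) ^ 2 + 4 * (c * i - j + f₀) ^ 2
        - 4 * c * (i + e) * (c * i - j + f₀)
        + c * (2 * f₀ - c * e) * (i + e) + 2 * (c * e - 2 * f₀) * (c * i - j + f₀)
      = c ^ 2 * i ^ 2 + 4 * j ^ 2 - 4 * c * i * j
        + c * (2 * f₀ - c * e) * i + 2 * (c * e - 2 * f₀) * j) := by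
  refine ⟨?_, ?_, ?_, ?_⟩
  · apply Finite.injective_iff_bijective.mp
    intro ⟨a, b⟩ ⟨a', b'⟩ h
    simp only [Prod.mk.injEq] at h
    obtain ⟨h1, h2⟩ := h
    have ha : a = a' := by linear_combination h1
    have hb : b = b' := by linear_combination c * ha - h2
    simp [ha, hb]
  · intro i₁ i₂ j hne h
    exact hne (mul_left_cancel₀ hc (by linear_combination h))
  · intro i j h
    exact he (by linear_combination h)
  · intro i j
    ring
end

section
/- (Hopping pattern of type A1) Let m be a positive odd integer and n a positive integer divisible by m. Let I' = {1, 2, …, m−1} and J = {0, 1, …, n−1}. Let u and v be integers with gcd(u, m) = 1, gcd(u − 1, m) = 1 and gcd(v, m) = 1. Define f : I' × J → I' × J by f(i, j) = ((u·i) mod m, (j − v·i + v·((u·i) mod m)) mod n). Then f is a well-defined bijection of I' × J satisfying: (i) for every j ∈ J, if f₂(i₁, j) = f₂(i₂, j) then i₁ = i₂; (ii) f₁(i, j) ≠ i for all (i, j) ∈ I' × J; and (iii) the function g(i, j) = (j − v·i) mod n is a hopping invariant, i.e. g(f(i, j)) = g(i, j) for all (i, j) ∈ I' × J. -/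
/-!
The first coordinate is multiplication by the unit `u` of `ℤ/m`, which permutes the nonzero
residues and, since `u - 1` is also a unit, fixes none of them. Modulo `m` (a divisor of `n`)
the second coordinate is `j + v (u - 1) i`, so on a fixed column `j` distinct rows `i` land
on distinct resources because `v (u - 1)` is a unit. The hop adds `v (u i mod m) - v i` to
`j`, which is exactly what the invariant `j - v i` subtracts back.
-/

namespace Int

theorem eq_of_modEq_of_nonneg_of_lt {m a b : ℤ} (h : a ≡ b [ZMOD m]) (ha₀ : 0 ≤ a)
    (ha : a < m) (hb₀ : 0 ≤ b) (hb : b < m) : a = b := by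
  rwa [Int.ModEq, Int.emod_eq_of_lt ha₀ ha, Int.emod_eq_of_lt hb₀ hb] at h

theorem ModEq.cancel_left_of_isCoprime {m c a b : ℤ} (hc : IsCoprime c m)
    (h : c * a ≡ c * b [ZMOD m]) : a ≡ b [ZMOD m] := by
  rw [Int.modEq_iff_dvd, ← mul_sub] at h
  exact Int.modEq_iff_dvd.2 (hc.symm.dvd_of_dvd_mul_left h)

theorem mul_emod_ne_zero_of_isCoprime {m c i : ℤ} (hc : IsCoprime c m) (hi₁ : 1 ≤ i)
    (hi : i < m) : c * i % m ≠ 0 := by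
  intro h
  have hi₀ : c * i ≡ c * 0 [ZMOD m] := by simpa [Int.ModEq] using h
  have := eq_of_modEq_of_nonneg_of_lt (hi₀.cancel_left_of_isCoprime hc) (by omega) hi le_rfl
    (by omega)
  omega

theorem mul_emod_ne_self_of_isCoprime_sub_one {m u i : ℤ} (hu : IsCoprime (u - 1) m)
    (hi₁ : 1 ≤ i) (hi : i < m) : u * i % m ≠ i := by
  intro h
  have hfix : u * i ≡ i [ZMOD m] := by rw [Int.ModEq, h, Int.emod_eq_of_lt (by omega) hi]
  apply mul_emod_ne_zero_of_isCoprime hu hi₁ hi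
  simpa [Int.ModEq, sub_mul] using hfix.sub_right i

end Int

section HoppingA1

variable (m n u v : ℤ)

def hopGrid : Set (ℤ × ℤ) := {x | 1 ≤ x.1 ∧ x.1 < m ∧ 0 ≤ x.2 ∧ x.2 < n}

def hopA1 (x : ℤ × ℤ) : ℤ × ℤ := (u * x.1 % m, (x.2 - v * x.1 + v * (u * x.1 % m)) % n)

theorem hopGrid_finite : (hopGrid m n).Finite :=
  (Set.finite_Icc ((1 : ℤ), (0 : ℤ)) (m, n)).subset fun _ ⟨h₁, h₂, h₃, h₄⟩ =>
    ⟨⟨h₁, h₃⟩, h₂.le, h₄.le⟩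

variable {m n u v}

theorem hopA1_mapsTo (hu : IsCoprime u m) :
    Set.MapsTo (hopA1 m n u v) (hopGrid m n) (hopGrid m n) := by
  rintro ⟨i, j⟩ ⟨hi₁, hi, hj₀, hj⟩
  have hm : m ≠ 0 := by omega
  exact ⟨(Int.emod_nonneg _ hm).lt_of_ne (Int.mul_emod_ne_zero_of_isCoprime hu hi₁ hi).symm,
    Int.emod_lt_of_pos _ (by omega), Int.emod_nonneg _ (by omega),
    Int.emod_lt_of_pos _ (by omega)⟩

theorem hopA1_injOn (hu : IsCoprime u m) : Set.InjOn (hopA1 m n u v) (hopGrid m n) := by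
  rintro ⟨i₁, j₁⟩ ⟨hi₁, hi₁', hj₁, hj₁'⟩ ⟨i₂, j₂⟩ ⟨hi₂, hi₂', hj₂, hj₂'⟩ h
  obtain ⟨hrow, hcol⟩ := Prod.mk.inj h
  obtain rfl : i₁ = i₂ := Int.eq_of_modEq_of_nonneg_of_lt
    (Int.ModEq.cancel_left_of_isCoprime hu hrow) (by omega) hi₁' (by omega) hi₂'
  have hj : j₁ ≡ j₂ [ZMOD n] := by
    simpa using Int.ModEq.add_right (v * i₁ - v * (u * i₁ % m)) hcol
  rw [Int.eq_of_modEq_of_nonneg_of_lt hj hj₁ hj₁' hj₂ hj₂']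

theorem hopA1_bijOn (hu : IsCoprime u m) :
    Set.BijOn (hopA1 m n u v) (hopGrid m n) (hopGrid m n) :=
  ((hopGrid_finite m n).injOn_iff_bijOn_of_mapsTo (hopA1_mapsTo hu)).1 (hopA1_injOn hu)

theorem hopA1_snd_modEq (i j : ℤ) :
    j - v * i + v * (u * i % m) ≡ j + v * (u - 1) * i [ZMOD m] :=
  calc j - v * i + v * (u * i % m) ≡ j - v * i + v * (u * i) [ZMOD m] :=
        ((Int.mod_modEq (u * i) m).mul_left v).add_left _
    _ = j + v * (u - 1) * i := by ring

theorem eq_of_hopA1_snd_emod_eq (hmn : m ∣ n) (hu₁ : IsCoprime (u - 1) m)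
    (hv : IsCoprime v m) {i₁ i₂ j : ℤ} (hi₁ : 1 ≤ i₁) (hi₁' : i₁ < m) (hi₂ : 1 ≤ i₂)
    (hi₂' : i₂ < m)
    (h : (j - v * i₁ + v * (u * i₁ % m)) % n = (j - v * i₂ + v * (u * i₂ % m)) % n) :
    i₁ = i₂ := by
  have hm : j + v * (u - 1) * i₁ ≡ j + v * (u - 1) * i₂ [ZMOD m] :=
    (hopA1_snd_modEq i₁ j).symm.trans ((Int.ModEq.of_dvd hmn h).trans (hopA1_snd_modEq i₂ j))
  exact Int.eq_of_modEq_of_nonneg_of_lt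
    ((Int.ModEq.add_left_cancel' j hm).cancel_left_of_isCoprime (hv.mul_left hu₁))
    (by omega) hi₁' (by omega) hi₂'

end HoppingA1

theorem stmt_3_general (m n u v : ℤ) (hmn : m ∣ n)
    (hu : Int.gcd u m = 1) (hu1 : Int.gcd (u - 1) m = 1) (hv : Int.gcd v m = 1) :
    Set.BijOn (fun x : ℤ × ℤ => (u * x.1 % m, (x.2 - v * x.1 + v * (u * x.1 % m)) % n))
      {x : ℤ × ℤ | 1 ≤ x.1 ∧ x.1 < m ∧ 0 ≤ x.2 ∧ x.2 < n}
      {x : ℤ × ℤ | 1 ≤ x.1 ∧ x.1 < m ∧ 0 ≤ x.2 ∧ x.2 < n} ∧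
    (∀ i₁ i₂ j : ℤ, 1 ≤ i₁ → i₁ < m → 1 ≤ i₂ → i₂ < m → 0 ≤ j → j < n →
      (j - v * i₁ + v * (u * i₁ % m)) % n = (j - v * i₂ + v * (u * i₂ % m)) % n →
      i₁ = i₂) ∧
    (∀ i j : ℤ, 1 ≤ i → i < m → 0 ≤ j → j < n → u * i % m ≠ i) ∧
    (∀ i j : ℤ, 1 ≤ i → i < m → 0 ≤ j → j < n →
      ((j - v * i + v * (u * i % m)) % n - v * (u * i % m)) % n = (j - v * i) % n) := by
  have hu := Int.isCoprime_iff_gcd_eq_one.2 hu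
  have hu1 := Int.isCoprime_iff_gcd_eq_one.2 hu1
  have hv := Int.isCoprime_iff_gcd_eq_one.2 hv
  exact ⟨hopA1_bijOn hu,
    fun _ _ _ hi₁ hi₁' hi₂ hi₂' _ _ h =>
      eq_of_hopA1_snd_emod_eq hmn hu1 hv hi₁ hi₁' hi₂ hi₂' h,
    fun _ _ hi hi' _ _ => Int.mul_emod_ne_self_of_isCoprime_sub_one hu1 hi hi',
    fun _ _ _ _ _ _ => by rw [Int.emod_sub_emod, add_sub_cancel_right]⟩

/-- Hopping pattern of type A1: with `m` odd positive, `m ∣ n`, and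
`gcd(u,m) = gcd(u−1,m) = gcd(v,m) = 1`, the map
`f(i,j) = (u·i mod m, (j − v·i + v·(u·i mod m)) mod n)` is a bijection of
`I' × J = {1,…,m−1} × {0,…,n−1}` satisfying the half-duplex condition, the
frequency-hopping condition, and admitting the hopping invariant
`g(i,j) = (j − v·i) mod n`. -/
theorem stmt_3 (m n u v : ℤ) (hm : 0 < m) (hmodd : Odd m) (hn : 0 < n) (hmn : m ∣ n)
    (hu : Int.gcd u m = 1) (hu1 : Int.gcd (u - 1) m = 1) (hv : Int.gcd v m = 1) :
    Set.BijOn (fun x : ℤ × ℤ => (u * x.1 % m, (x.2 - v * x.1 + v * (u * x.1 % m)) % n))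
      {x : ℤ × ℤ | 1 ≤ x.1 ∧ x.1 < m ∧ 0 ≤ x.2 ∧ x.2 < n}
      {x : ℤ × ℤ | 1 ≤ x.1 ∧ x.1 < m ∧ 0 ≤ x.2 ∧ x.2 < n} ∧
    (∀ i₁ i₂ j : ℤ, 1 ≤ i₁ → i₁ < m → 1 ≤ i₂ → i₂ < m → 0 ≤ j → j < n →
      (j - v * i₁ + v * (u * i₁ % m)) % n = (j - v * i₂ + v * (u * i₂ % m)) % n →
      i₁ = i₂) ∧
    (∀ i j : ℤ, 1 ≤ i → i < m → 0 ≤ j → j < n → u * i % m ≠ i) ∧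
    (∀ i j : ℤ, 1 ≤ i → i < m → 0 ≤ j → j < n →
      ((j - v * i + v * (u * i % m)) % n - v * (u * i % m)) % n = (j - v * i) % n) :=
  stmt_3_general m n u v hmn hu hu1 hv
end

section
/- (Hopping pattern of type A2) Let m be a positive odd integer and n a positive integer with n ≥ m. Let I' = {1, 2, …, m−1} and J = {0, 1, …, n−1}. Define f : I' × J → I' × J by f(i, j) = ((2i) mod m, (j − i + ((2i) mod m)) mod n). Then f is a well-defined bijection of I' × J satisfying: (i) for every j ∈ J, if f₂(i₁, j) = f₂(i₂, j) then i₁ = i₂; (ii) f₁(i, j) ≠ i for all (i, j) ∈ I' × J; and (iii) the function g(i, j) = (j − i) mod n is a hopping invariant, i.e. g(f(i, j)) = g(i, j) for all (i, j) ∈ I' × J. -/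
/-!
Doubling `i ↦ 2i mod m` permutes `{1, …, m-1}` when `m` is odd, and the second coordinate is a
translate of `j` modulo `n` by an amount depending only on `i`, so `f` is a bijection. The
frequency shift is `j ↦ j + d(i)` with `d(i) = (2i mod m) - i`, which is `i` or `i - m`; it
determines `i`, and two values of `d` differ by less than `m ≤ n`, which gives the half-duplex
condition. Subtracting `2i mod m` undoes the shift modulo `n`, so `(j - i) mod n` is invariant.
-/

theorem bijOn_skew_emod {s : Set ℤ} {σ : ℤ → ℤ} (hσ : Set.BijOn σ s s) (τ : ℤ → ℤ) (n : ℤ) :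
    Set.BijOn (fun x : ℤ × ℤ => (σ x.1, (x.2 + τ x.1) % n))
      (s ×ˢ Set.Ico 0 n) (s ×ˢ Set.Ico 0 n) := by
  refine ⟨?_, ?_, ?_⟩
  · rintro ⟨i, j⟩ ⟨hi, hj0, hjn⟩
    exact ⟨hσ.mapsTo hi, Int.emod_nonneg _ (by omega), Int.emod_lt_of_pos _ (by omega)⟩
  · rintro ⟨i₁, j₁⟩ ⟨hi₁, hj₁⟩ ⟨i₂, j₂⟩ ⟨hi₂, hj₂⟩ h
    obtain ⟨hσi, hj⟩ := Prod.mk.inj h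
    obtain rfl : i₁ = i₂ := hσ.injOn hi₁ hi₂ hσi
    have hmod : j₁ ≡ j₂ [ZMOD n] := Int.ModEq.add_right_cancel' (τ i₁) hj
    have e₁ : j₁ % n = j₁ := Int.emod_eq_of_lt hj₁.1 hj₁.2
    have e₂ : j₂ % n = j₂ := Int.emod_eq_of_lt hj₂.1 hj₂.2
    exact Prod.ext rfl (e₁.symm.trans (hmod.eq.trans e₂))
  · rintro ⟨i', j'⟩ ⟨hi', hj0, hjn⟩
    obtain ⟨i, hi, rfl⟩ := hσ.surjOn hi'
    refine ⟨(i, (j' - τ i) % n), ⟨hi, Int.emod_nonneg _ (by omega),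
      Int.emod_lt_of_pos _ (by omega)⟩, ?_⟩
    simp only [Int.emod_add_emod, sub_add_cancel, Int.emod_eq_of_lt hj0 hjn]

section TwoMulEmod

variable {m i : ℤ}

theorem two_mul_emod_eq_or_eq_sub (h0 : 0 ≤ i) (hi : i < m) :
    (2 * i < m ∧ 2 * i % m = 2 * i) ∨ (m ≤ 2 * i ∧ 2 * i % m = 2 * i - m) := by
  by_cases h : 2 * i < m
  · exact Or.inl ⟨h, Int.emod_eq_of_lt (by omega) h⟩
  · refine Or.inr ⟨by omega, ?_⟩
    rw [← Int.sub_emod_right]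
    exact Int.emod_eq_of_lt (by omega) (by omega)

theorem two_mul_emod_ne_self (h0 : 0 < i) (hi : i < m) : 2 * i % m ≠ i := by
  rcases two_mul_emod_eq_or_eq_sub h0.le hi with ⟨_, h⟩ | ⟨_, h⟩ <;> omega

theorem Odd.mapsTo_two_mul_emod (hm : Odd m) :
    Set.MapsTo (fun i => 2 * i % m) (Set.Ico 1 m) (Set.Ico 1 m) := by
  rintro i ⟨h1, hi⟩
  obtain ⟨t, rfl⟩ := hm
  show 1 ≤ 2 * i % _ ∧ 2 * i % _ < _
  rcases two_mul_emod_eq_or_eq_sub (by omega : 0 ≤ i) hi with ⟨_, h⟩ | ⟨_, h⟩ <;> omega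

theorem Odd.injOn_two_mul_emod (hm : Odd m) :
    Set.InjOn (fun i => 2 * i % m) (Set.Ico 0 m) := by
  rintro i₁ ⟨h0₁, hi₁⟩ i₂ ⟨h0₂, hi₂⟩ h
  obtain ⟨t, rfl⟩ := hm
  rcases two_mul_emod_eq_or_eq_sub h0₁ hi₁ with ⟨_, h₁⟩ | ⟨_, h₁⟩ <;>
    rcases two_mul_emod_eq_or_eq_sub h0₂ hi₂ with ⟨_, h₂⟩ | ⟨_, h₂⟩ <;>
    simp only at h <;> omega

theorem Odd.bijOn_two_mul_emod (hm : Odd m) :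
    Set.BijOn (fun i => 2 * i % m) (Set.Ico 1 m) (Set.Ico 1 m) :=
  ((Set.finite_Ico 1 m).injOn_iff_bijOn_of_mapsTo hm.mapsTo_two_mul_emod).mp
    (hm.injOn_two_mul_emod.mono (Set.Ico_subset_Ico_left zero_le_one))

theorem injOn_two_mul_emod_sub_self : Set.InjOn (fun i => 2 * i % m - i) (Set.Ico 0 m) := by
  rintro i₁ ⟨h0₁, hi₁⟩ i₂ ⟨h0₂, hi₂⟩ h
  rcases two_mul_emod_eq_or_eq_sub h0₁ hi₁ with ⟨_, h₁⟩ | ⟨_, h₁⟩ <;>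
    rcases two_mul_emod_eq_or_eq_sub h0₂ hi₂ with ⟨_, h₂⟩ | ⟨_, h₂⟩ <;>
    simp only at h <;> omega

theorem abs_two_mul_emod_sub_self_sub_lt {i₁ i₂ : ℤ} (h0₁ : 0 ≤ i₁) (hi₁ : i₁ < m)
    (h0₂ : 0 ≤ i₂) (hi₂ : i₂ < m) :
    |(2 * i₁ % m - i₁) - (2 * i₂ % m - i₂)| < m := by
  rw [abs_lt]
  rcases two_mul_emod_eq_or_eq_sub h0₁ hi₁ with ⟨_, h₁⟩ | ⟨_, h₁⟩ <;>
    rcases two_mul_emod_eq_or_eq_sub h0₂ hi₂ with ⟨_, h₂⟩ | ⟨_, h₂⟩ <;>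
    exact ⟨by omega, by omega⟩

theorem eq_of_emod_sub_add_two_mul_emod_eq {n i₁ i₂ : ℤ} (j : ℤ) (hmn : m ≤ n)
    (h0₁ : 0 ≤ i₁) (hi₁ : i₁ < m) (h0₂ : 0 ≤ i₂) (hi₂ : i₂ < m)
    (h : (j - i₁ + 2 * i₁ % m) % n = (j - i₂ + 2 * i₂ % m) % n) : i₁ = i₂ := by
  have hmod : 2 * i₂ % m - i₂ ≡ 2 * i₁ % m - i₁ [ZMOD n] := by
    refine Int.ModEq.add_left_cancel' j ?_
    simpa only [Int.ModEq, sub_add_eq_add_sub, add_sub_assoc] using h.symm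
  have hsub := Int.eq_zero_of_abs_lt_dvd hmod.dvd
    ((abs_two_mul_emod_sub_self_sub_lt h0₁ hi₁ h0₂ hi₂).trans_le hmn)
  exact injOn_two_mul_emod_sub_self ⟨h0₁, hi₁⟩ ⟨h0₂, hi₂⟩ (sub_eq_zero.mp hsub)

end TwoMulEmod

theorem stmt_4_general (m n : ℤ) (hmodd : Odd m) (hmn : m ≤ n) :
    Set.BijOn (fun x : ℤ × ℤ => (2 * x.1 % m, (x.2 - x.1 + 2 * x.1 % m) % n))
      {x : ℤ × ℤ | 1 ≤ x.1 ∧ x.1 < m ∧ 0 ≤ x.2 ∧ x.2 < n}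
      {x : ℤ × ℤ | 1 ≤ x.1 ∧ x.1 < m ∧ 0 ≤ x.2 ∧ x.2 < n} ∧
    (∀ i₁ i₂ j : ℤ, 1 ≤ i₁ → i₁ < m → 1 ≤ i₂ → i₂ < m → 0 ≤ j → j < n →
      (j - i₁ + 2 * i₁ % m) % n = (j - i₂ + 2 * i₂ % m) % n → i₁ = i₂) ∧
    (∀ i j : ℤ, 1 ≤ i → i < m → 0 ≤ j → j < n → 2 * i % m ≠ i) ∧
    (∀ i j : ℤ, 1 ≤ i → i < m → 0 ≤ j → j < n →
      ((j - i + 2 * i % m) % n - 2 * i % m) % n = (j - i) % n) := by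
  have hbij := bijOn_skew_emod hmodd.bijOn_two_mul_emod (fun i => 2 * i % m - i) n
  have hset : {x : ℤ × ℤ | 1 ≤ x.1 ∧ x.1 < m ∧ 0 ≤ x.2 ∧ x.2 < n} =
      Set.Ico 1 m ×ˢ Set.Ico 0 n := by
    ext x
    simp only [Set.mem_ofPred_eq, Set.mem_prod, Set.mem_Ico, and_assoc]
  refine ⟨?_, fun i₁ i₂ j h1₁ hi₁ h1₂ hi₂ _ _ h =>
      eq_of_emod_sub_add_two_mul_emod_eq j hmn (by omega) hi₁ (by omega) hi₂ h,
    fun i _ h1 hi _ _ => two_mul_emod_ne_self h1 hi,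
    fun i j _ _ _ _ => by rw [Int.emod_sub_emod, add_sub_cancel_right]⟩
  rw [hset]
  convert hbij using 3 with x
  rw [sub_add_eq_add_sub, add_sub_assoc]

/-- Hopping pattern of type A2: with `m` odd positive and `n ≥ m`, the map
`f(i,j) = (2i mod m, (j − i + (2i mod m)) mod n)` is a bijection of
`I' × J = {1,…,m−1} × {0,…,n−1}` satisfying the half-duplex condition, the
frequency-hopping condition, and admitting the hopping invariant
`g(i,j) = (j − i) mod n`. -/
theorem stmt_4 (m n : ℤ) (hm : 0 < m) (hmodd : Odd m) (hn : 0 < n) (hmn : m ≤ n) :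
    Set.BijOn (fun x : ℤ × ℤ => (2 * x.1 % m, (x.2 - x.1 + 2 * x.1 % m) % n))
      {x : ℤ × ℤ | 1 ≤ x.1 ∧ x.1 < m ∧ 0 ≤ x.2 ∧ x.2 < n}
      {x : ℤ × ℤ | 1 ≤ x.1 ∧ x.1 < m ∧ 0 ≤ x.2 ∧ x.2 < n} ∧
    (∀ i₁ i₂ j : ℤ, 1 ≤ i₁ → i₁ < m → 1 ≤ i₂ → i₂ < m → 0 ≤ j → j < n →
      (j - i₁ + 2 * i₁ % m) % n = (j - i₂ + 2 * i₂ % m) % n → i₁ = i₂) ∧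
    (∀ i j : ℤ, 1 ≤ i → i < m → 0 ≤ j → j < n → 2 * i % m ≠ i) ∧
    (∀ i j : ℤ, 1 ≤ i → i < m → 0 ≤ j → j < n →
      ((j - i + 2 * i % m) % n - 2 * i % m) % n = (j - i) % n) :=
  stmt_4_general m n hmodd hmn
end

section
/- (Hopping pattern of type B2) Let m be a positive odd integer and n a positive integer divisible by m. Let I = {0, 1, …, m−1} and J = {0, 1, …, n−1}. Let e be an integer not divisible by m, c an integer coprime to m, and f₀ an arbitrary integer. Define F : I × J → I × J by F(i, j) = ((i + e) mod m, (c·i − j + f₀) mod n). Then F is a bijection of I × J satisfying: (i) for every j ∈ J, if F₂(i₁, j) = F₂(i₂, j) then i₁ = i₂; (ii) F₁(i, j) ≠ i for all (i, j) ∈ I × J; and (iii) the function Q(i, j) = (c²·i² + 4j² − 4c·i·j + c(2f₀ − ce)·i + 2(ce − 2f₀)·j) mod m is a hopping invariant, i.e. Q(F(i, j)) = Q(i, j) for all (i, j) ∈ I × J. -/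
/-- Hopping pattern of type B2: with `m` odd positive, `m ∣ n`, `m ∤ e` and
`gcd(c,m) = 1`, the map `F(i,j) = ((i+e) mod m, (c·i − j + f₀) mod n)` is a
bijection of `I × J = {0,…,m−1} × {0,…,n−1}` satisfying the half-duplex
condition, the frequency-hopping condition, and admitting the hopping invariant
`Q(i,j) = (c²·i² + 4j² − 4c·i·j + c(2f₀ − ce)·i + 2(ce − 2f₀)·j) mod m`. -/
theorem stmt_6 (m n e c f₀ : ℤ) (hm : 0 < m) (hmodd : Odd m) (hn : 0 < n) (hmn : m ∣ n)
    (he : ¬ (m ∣ e)) (hc : Int.gcd c m = 1) :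
    Set.BijOn (fun x : ℤ × ℤ => ((x.1 + e) % m, (c * x.1 - x.2 + f₀) % n))
      {x : ℤ × ℤ | 0 ≤ x.1 ∧ x.1 < m ∧ 0 ≤ x.2 ∧ x.2 < n}
      {x : ℤ × ℤ | 0 ≤ x.1 ∧ x.1 < m ∧ 0 ≤ x.2 ∧ x.2 < n} ∧
    (∀ i₁ i₂ j : ℤ, 0 ≤ i₁ → i₁ < m → 0 ≤ i₂ → i₂ < m → 0 ≤ j → j < n →
      (c * i₁ - j + f₀) % n = (c * i₂ - j + f₀) % n → i₁ = i₂) ∧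
    (∀ i j : ℤ, 0 ≤ i → i < m → 0 ≤ j → j < n → (i + e) % m ≠ i) ∧
    (∀ i j : ℤ, 0 ≤ i → i < m → 0 ≤ j → j < n →
      (c ^ 2 * ((i + e) % m) ^ 2 + 4 * ((c * i - j + f₀) % n) ^ 2
        - 4 * c * ((i + e) % m) * ((c * i - j + f₀) % n)
        + c * (2 * f₀ - c * e) * ((i + e) % m)
        + 2 * (c * e - 2 * f₀) * ((c * i - j + f₀) % n)) % m
      = (c ^ 2 * i ^ 2 + 4 * j ^ 2 - 4 * c * i * j
        + c * (2 * f₀ - c * e) * i + 2 * (c * e - 2 * f₀) * j) % m) := by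
  have hcop : IsCoprime c m := Int.isCoprime_iff_gcd_eq_one.mpr hc
  refine ⟨⟨?_, ?_, ?_⟩, ?_, ?_, ?_⟩
  · -- maps to
    rintro ⟨i, j⟩ ⟨hi0, him, hj0, hjn⟩
    exact ⟨Int.emod_nonneg _ hm.ne', Int.emod_lt_of_pos _ hm,
      Int.emod_nonneg _ hn.ne', Int.emod_lt_of_pos _ hn⟩
  · -- injective
    rintro ⟨i, j⟩ ⟨hi0, him, hj0, hjn⟩ ⟨i', j'⟩ ⟨hi0', him', hj0', hjn'⟩ h
    simp only [Prod.mk.injEq] at h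
    obtain ⟨h1, h2⟩ := h
    have hmi : m ∣ i - i' := by
      have hd : m ∣ (i + e) - (i' + e) := Int.ModEq.dvd (h1.symm : Int.ModEq m _ _)
      simpa using hd
    have hii : i = i' := by
      have := Int.eq_zero_of_abs_lt_dvd hmi (abs_lt.mpr ⟨by omega, by omega⟩)
      omega
    subst hii
    have hd : n ∣ (c * i - j + f₀) - (c * i - j' + f₀) := Int.ModEq.dvd h2.symm
    have : n ∣ j' - j := by
      have : (c * i - j + f₀) - (c * i - j' + f₀) = j' - j := by ring
      rwa [this] at hd
    have := Int.eq_zero_of_abs_lt_dvd this (abs_lt.mpr ⟨by omega, by omega⟩)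
    have : j = j' := by omega
    exact Prod.ext rfl this
  · -- surjective
    rintro ⟨a, b⟩ ⟨ha0, ham, hb0, hbn⟩
    refine ⟨((a - e) % m, (c * ((a - e) % m) + f₀ - b) % n), ?_, ?_⟩
    · exact ⟨Int.emod_nonneg _ hm.ne', Int.emod_lt_of_pos _ hm,
        Int.emod_nonneg _ hn.ne', Int.emod_lt_of_pos _ hn⟩
    · simp only [Prod.mk.injEq]
      constructor
      · have h1 : ((a - e) % m + e) % m = (a - e + e) % m :=
          Int.ModEq.add_right e (Int.emod_emod_of_dvd _ (dvd_refl m))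
        have h1' : a - e + e = a := by ring
        rw [h1, h1', Int.emod_eq_of_lt ha0 ham]
      · set i := (a - e) % m
        have h2 : (c * i - (c * i + f₀ - b) % n + f₀) % n = (c * i - (c * i + f₀ - b) + f₀) % n :=
          (Int.ModEq.add_right f₀ ((Int.ModEq.refl (c * i)).sub
            (Int.emod_emod_of_dvd _ (dvd_refl n))))
        have h3' : c * i - (c * i + f₀ - b) + f₀ = b := by ring
        have h3 : (c * i - (c * i + f₀ - b) + f₀) % n = b % n := by rw [h3']
        rw [h2, h3, Int.emod_eq_of_lt hb0 hbn]
  · -- half duplex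
    intro i₁ i₂ j hj1 hj2 hj3 hj4 hj5 hj6 h
    have hd : n ∣ (c * i₁ - j + f₀) - (c * i₂ - j + f₀) := Int.ModEq.dvd h.symm
    have hd' : m ∣ c * (i₁ - i₂) := by
      have : (c * i₁ - j + f₀) - (c * i₂ - j + f₀) = c * (i₁ - i₂) := by ring
      exact hmn.trans (this ▸ hd)
    have : m ∣ i₁ - i₂ := hcop.symm.dvd_of_dvd_mul_left hd'
    have := Int.eq_zero_of_abs_lt_dvd this (abs_lt.mpr ⟨by omega, by omega⟩)
    omega
  · -- frequency hopping
    intro i j hi0 him hj0 hjn h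
    apply he
    have : (i + e) % m = i % m := by rw [h, Int.emod_eq_of_lt hi0 him]
    have hd : m ∣ (i + e) - i := Int.ModEq.dvd this.symm
    simpa using hd
  · -- invariant
    intro i j hi0 him hj0 hjn
    have ha : (i + e) % m ≡ i + e [ZMOD m] := Int.emod_emod_of_dvd _ (dvd_refl m)
    have hb : (c * i - j + f₀) % n ≡ c * i - j + f₀ [ZMOD m] := Int.emod_emod_of_dvd _ hmn
    have h1 : (c ^ 2 * ((i + e) % m) ^ 2 + 4 * ((c * i - j + f₀) % n) ^ 2
        - 4 * c * ((i + e) % m) * ((c * i - j + f₀) % n)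
        + c * (2 * f₀ - c * e) * ((i + e) % m)
        + 2 * (c * e - 2 * f₀) * ((c * i - j + f₀) % n))
        ≡ (c ^ 2 * (i + e) ^ 2 + 4 * (c * i - j + f₀) ^ 2
        - 4 * c * (i + e) * (c * i - j + f₀)
        + c * (2 * f₀ - c * e) * (i + e)
        + 2 * (c * e - 2 * f₀) * (c * i - j + f₀)) [ZMOD m] := by
      exact (((((Int.ModEq.refl (c ^ 2)).mul (ha.pow 2)).add
        ((Int.ModEq.refl 4).mul (hb.pow 2))).sub
        (((Int.ModEq.refl (4 * c)).mul ha).mul hb)).add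
        ((Int.ModEq.refl (c * (2 * f₀ - c * e))).mul ha)).add
        ((Int.ModEq.refl (2 * (c * e - 2 * f₀))).mul hb)
    have h2 : (c ^ 2 * (i + e) ^ 2 + 4 * (c * i - j + f₀) ^ 2
        - 4 * c * (i + e) * (c * i - j + f₀)
        + c * (2 * f₀ - c * e) * (i + e)
        + 2 * (c * e - 2 * f₀) * (c * i - j + f₀))
        = (c ^ 2 * i ^ 2 + 4 * j ^ 2 - 4 * c * i * j
        + c * (2 * f₀ - c * e) * i + 2 * (c * e - 2 * f₀) * j) := by ring
    exact h2 ▸ h1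
end

section
/- Let p be a prime and consider the full grid (ℤ/pℤ) × (ℤ/pℤ). There is no affine bijection F(i, j) = (a·i + b·j + e, c·i + d·j + f₀) of (ℤ/pℤ)² (with a, b, c, d, e, f₀ ∈ ℤ/pℤ and ad − bc ≠ 0) that simultaneously satisfies: (i) for every j and all i₁ ≠ i₂, c·i₁ + d·j + f₀ ≠ c·i₂ + d·j + f₀; (ii) a·i + b·j + e ≠ i for all (i, j) ∈ (ℤ/pℤ)²; and admits a nonzero linear hopping invariant, i.e. a pair (x, y) ∈ (ℤ/pℤ)² with (x, y) ≠ (0, 0) such that x·(a·i + b·j + e) + y·(c·i + d·j + f₀) = x·i + y·j for all (i, j) ∈ (ℤ/pℤ)². -/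
/-- No affine bijection of `(ZMod p)²` can simultaneously satisfy the
half-duplex condition, the frequency-hopping condition, and admit a nonzero
linear hopping invariant. -/
theorem stmt_7 (p : ℕ) [Fact p.Prime] :
    ¬ ∃ a b c d e f₀ : ZMod p,
      a * d - b * c ≠ 0 ∧
      (∀ i₁ i₂ j : ZMod p, i₁ ≠ i₂ → c * i₁ + d * j + f₀ ≠ c * i₂ + d * j + f₀) ∧
      (∀ i j : ZMod p, a * i + b * j + e ≠ i) ∧
      (∃ x y : ZMod p, (x, y) ≠ ((0 : ZMod p), (0 : ZMod p)) ∧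
        ∀ i j : ZMod p,
          x * (a * i + b * j + e) + y * (c * i + d * j + f₀) = x * i + y * j) := by
  rintro ⟨a, b, c, d, e, f₀, hdet, h1, h2, x, y, hxy, hinv⟩
  -- c ≠ 0
  have hc : c ≠ 0 := by
    intro hc
    exact h1 0 1 0 zero_ne_one (by rw [hc]; ring)
  -- a = 1
  have ha : a = 1 := by
    by_contra ha
    have h : (1 - a) ≠ 0 := sub_ne_zero.mpr (Ne.symm ha)
    apply h2 ((1 - a)⁻¹ * (b * 0 + e)) 0
    field_simp
    ring
  -- b = 0
  have hb : b = 0 := by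
    by_contra hb
    apply h2 0 (b⁻¹ * (-e))
    rw [ha]
    field_simp
    ring
  -- e ≠ 0
  have he : e ≠ 0 := by
    have := h2 0 0
    simpa using this
  have h00 := hinv 0 0
  have h10 := hinv 1 0
  rw [ha, hb] at h00 h10
  have hyc : y * c = 0 := by linear_combination h10 - h00
  have hy : y = 0 := by
    rcases mul_eq_zero.mp hyc with h | h
    · exact h
    · exact absurd h hc
  have hx : x = 0 := by
    rw [hy] at h00
    have : x * e = 0 := by linear_combination h00
    rcases mul_eq_zero.mp this with h | h
    · exact h
    · exact absurd h he
  exact hxy (by rw [hx, hy])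
end

section
/- Let m be a positive odd integer and n a positive integer with n ≥ m. Then the map from {0, 1, …, m−1} to {0, 1, …, n−1} sending x to (((2x) mod m) − x) mod n is injective. -/
/-!
Write `g x = 2 * x % m - x`. Then `g x ≡ x [ZMOD m]`, and on `0 ≤ x < m` we have `g x = x` when
`2 * x < m` and `g x = x - m` otherwise, so `g` takes values in `[-m/2, m/2)`. Two values of `g` thus
differ by less than `m ≤ n`: if they agree mod `n` they are equal, hence the arguments agree mod `m`,
and being in `[0, m)` they are equal.
-/

namespace Int

theorem ModEq.eq_of_abs_sub_lt {n a b : ℤ} (h : a ≡ b [ZMOD n]) (hab : |b - a| < n) : a = b :=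
  (sub_eq_zero.mp (eq_zero_of_abs_lt_dvd h.dvd hab)).symm

theorem two_mul_emod_sub_self_modEq (m x : ℤ) : 2 * x % m - x ≡ x [ZMOD m] := by
  simpa [two_mul] using (mod_modEq (2 * x) m).sub_right x

theorem two_mul_emod_sub_self_bounds {m x : ℤ} (hx₀ : 0 ≤ x) (hxm : x < m) :
    -m ≤ 2 * (2 * x % m - x) ∧ 2 * (2 * x % m - x) < m := by
  rcases lt_or_ge (2 * x) m with hlt | hge
  · rw [emod_eq_of_lt (by omega) hlt]
    omega
  · rw [← sub_emod_right, emod_eq_of_lt (by omega) (by omega)]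
    omega

end Int

theorem stmt_8_general (m n : ℤ) (hmn : m ≤ n) :
    Set.InjOn (fun x : ℤ => (2 * x % m - x) % n) {x : ℤ | 0 ≤ x ∧ x < m} := by
  rintro x ⟨hx₀, hxm⟩ y ⟨hy₀, hym⟩ hxy
  have hgx := Int.two_mul_emod_sub_self_bounds hx₀ hxm
  have hgy := Int.two_mul_emod_sub_self_bounds hy₀ hym
  have hg : 2 * x % m - x = 2 * y % m - y :=
    Int.ModEq.eq_of_abs_sub_lt hxy (abs_lt.mpr ⟨by omega, by omega⟩)
  have hmod : x ≡ y [ZMOD m] :=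
    (Int.two_mul_emod_sub_self_modEq m x).symm.trans (hg ▸ Int.two_mul_emod_sub_self_modEq m y)
  exact hmod.eq_of_abs_sub_lt (abs_lt.mpr ⟨by omega, by omega⟩)

/-- For `m` odd positive and `n ≥ m`, the map `x ↦ ((2x mod m) − x) mod n`
is injective on `{0, 1, …, m−1}`. -/
theorem stmt_8 (m n : ℤ) (hm : 0 < m) (hmodd : Odd m) (hmn : m ≤ n) :
    Set.InjOn (fun x : ℤ => (2 * x % m - x) % n) {x : ℤ | 0 ≤ x ∧ x < m} :=
  stmt_8_general m n hmn
end

section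
/- Let m be a positive integer and n a positive integer divisible by m, and let u, v be integers with gcd(u − 1, m) = 1 and gcd(v, m) = 1. If integers i₁, i₂ and j satisfy (j − v·i₁ + v·((u·i₁) mod m)) ≡ (j − v·i₂ + v·((u·i₂) mod m)) (mod n), then i₁ ≡ i₂ (mod m). -/
/-! Modulo `m` the reduction `u * i % m` is just `u * i`, so the hop index is `j + v (u - 1) i`,
an affine map of `i` whose slope `v (u - 1)` is a unit modulo `m`. -/

theorem Int.ModEq.cancel_left_of_isCoprime_s11 {m a b c : ℤ} (hc : IsCoprime c m)
    (h : c * a ≡ c * b [ZMOD m]) : a ≡ b [ZMOD m] := by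
  rw [Int.modEq_iff_dvd, ← mul_sub] at *
  exact hc.symm.dvd_of_dvd_mul_left h

theorem hop_modEq (m u v i j : ℤ) : j - v * i + v * (u * i % m) ≡ j + v * (u - 1) * i [ZMOD m] :=
  calc j - v * i + v * (u * i % m) ≡ j - v * i + v * (u * i) [ZMOD m] :=
        ((Int.mod_modEq _ _).mul_left v).add_left _
    _ = j + v * (u - 1) * i := by ring

theorem stmt_11_general (m n u v i₁ i₂ j : ℤ) (hmn : m ∣ n)
    (hu1 : Int.gcd (u - 1) m = 1) (hv : Int.gcd v m = 1)
    (h : (j - v * i₁ + v * (u * i₁ % m)) % n = (j - v * i₂ + v * (u * i₂ % m)) % n) :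
    i₁ % m = i₂ % m := by
  have hslope : IsCoprime (v * (u - 1)) m :=
    (Int.isCoprime_iff_gcd_eq_one.mpr hv).mul_left (Int.isCoprime_iff_gcd_eq_one.mpr hu1)
  have hhop : j + v * (u - 1) * i₁ ≡ j + v * (u - 1) * i₂ [ZMOD m] :=
    ((hop_modEq m u v i₁ j).symm.trans (Int.ModEq.of_dvd hmn h)).trans (hop_modEq m u v i₂ j)
  exact (Int.ModEq.add_left_cancel' j hhop).cancel_left_of_isCoprime_s11 hslope

/-- Half-duplex lemma for the type-A1 hopping pattern: if
`j − v·i₁ + v·(u·i₁ mod m) ≡ j − v·i₂ + v·(u·i₂ mod m) (mod n)` with `m ∣ n`,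
`gcd(u−1,m) = 1` and `gcd(v,m) = 1`, then `i₁ ≡ i₂ (mod m)`. -/
theorem stmt_11 (m n u v i₁ i₂ j : ℤ) (hm : 0 < m) (hn : 0 < n) (hmn : m ∣ n)
    (hu1 : Int.gcd (u - 1) m = 1) (hv : Int.gcd v m = 1)
    (h : (j - v * i₁ + v * (u * i₁ % m)) % n = (j - v * i₂ + v * (u * i₂ % m)) % n) :
    i₁ % m = i₂ % m :=
  stmt_11_general m n u v i₁ i₂ j hmn hu1 hv h
end

section
/- Let p be an odd prime, let c and e be nonzero elements of ℤ/pℤ, let d ∈ ℤ/pℤ with d² ≠ 1, and let f₀ ∈ ℤ/pℤ. Suppose x, y, u, v, w, z ∈ ℤ/pℤ are such that the quadratic function Q(i, j) = x·i² + y·j² + u·i·j + v·i + w·j + z satisfies Q(i + e, c·i + d·j + f₀) = Q(i, j) for all i, j ∈ ℤ/pℤ. Then x = y = u = v = w = 0, i.e. the affine map (i, j) ↦ (i + e, c·i + d·j + f₀) on (ℤ/pℤ)² admits no nonconstant quadratic hopping invariant when d² ≠ 1. -/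
/-!
Compare coefficients in `Q(i + e, c i + d j + f₀) = Q(i, j)`, reading them off as finite differences
of the identity at a few points. The `j²`, `i j` and `j` coefficients give `y (d² - 1) = 0`,
`u (d - 1) = 0` and `w (d - 1) = 0` (once the earlier ones vanish), so `d² ≠ 1` kills `y`, `u`, `w`.
Then the `i` coefficient gives `2 e x = 0` and the constant term `e v = 0`.
-/

namespace QuadraticHoppingInvariant

variable {K : Type*} [Field K] {c d e f x y u v w z : K}

def quadPoly (x y u v w z i j : K) : K :=
  x * i ^ 2 + y * j ^ 2 + u * i * j + v * i + w * j + z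

theorem y_eq_zero
    (hQ : ∀ i j, quadPoly x y u v w z (i + e) (c * i + d * j + f) = quadPoly x y u v w z i j)
    (h2 : (2 : K) ≠ 0) (hd : d ^ 2 ≠ 1) : y = 0 := by
  have key : 2 * y * (d ^ 2 - 1) = 0 := by
    unfold quadPoly at hQ
    linear_combination hQ 0 1 + hQ 0 (-1) - 2 * hQ 0 0
  simpa [h2, sub_ne_zero.mpr hd] using key

theorem u_eq_zero
    (hQ : ∀ i j, quadPoly x y u v w z (i + e) (c * i + d * j + f) = quadPoly x y u v w z i j)
    (hy : y = 0) (hd : d ≠ 1) : u = 0 := by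
  have key : u * (d - 1) = 0 := by
    unfold quadPoly at hQ
    linear_combination hQ 1 1 - hQ 1 0 - hQ 0 1 + hQ 0 0 - 2 * c * d * hy
  simpa [sub_ne_zero.mpr hd] using key

theorem w_eq_zero
    (hQ : ∀ i j, quadPoly x y u v w z (i + e) (c * i + d * j + f) = quadPoly x y u v w z i j)
    (h2 : (2 : K) ≠ 0) (hy : y = 0) (hu : u = 0) (hd : d ≠ 1) : w = 0 := by
  have key : 2 * w * (d - 1) = 0 := by
    unfold quadPoly at hQ
    linear_combination hQ 0 1 - hQ 0 (-1) - 4 * d * f * hy - 2 * e * d * hu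
  simpa [h2, sub_ne_zero.mpr hd] using key

theorem x_eq_zero
    (hQ : ∀ i j, quadPoly x y u v w z (i + e) (c * i + d * j + f) = quadPoly x y u v w z i j)
    (h2 : (2 : K) ≠ 0) (he : e ≠ 0) (hy : y = 0) (hu : u = 0) (hw : w = 0) : x = 0 := by
  have key : 4 * e * x = 0 := by
    unfold quadPoly at hQ
    linear_combination hQ 1 0 - hQ (-1) 0 - 4 * c * f * hy - 2 * (f + c * e) * hu - 2 * c * hw
  have h4 : (4 : K) ≠ 0 := by simpa [show (4 : K) = 2 * 2 by norm_num] using h2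
  simpa [h4, he] using key

theorem v_eq_zero
    (hQ : ∀ i j, quadPoly x y u v w z (i + e) (c * i + d * j + f) = quadPoly x y u v w z i j)
    (he : e ≠ 0) (hx : x = 0) (hy : y = 0) (hu : u = 0) (hw : w = 0) : v = 0 := by
  have key : e * v = 0 := by
    unfold quadPoly at hQ
    linear_combination hQ 0 0 - e ^ 2 * hx - f ^ 2 * hy - e * f * hu - f * hw
  simpa [he] using key

theorem coeffs_eq_zero
    (hQ : ∀ i j, quadPoly x y u v w z (i + e) (c * i + d * j + f) = quadPoly x y u v w z i j)
    (h2 : (2 : K) ≠ 0) (he : e ≠ 0) (hd : d ^ 2 ≠ 1) :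
    x = 0 ∧ y = 0 ∧ u = 0 ∧ v = 0 ∧ w = 0 := by
  have hd1 : d ≠ 1 := fun h => hd (by rw [h, one_pow])
  have hy := y_eq_zero hQ h2 hd
  have hu := u_eq_zero hQ hy hd1
  have hw := w_eq_zero hQ h2 hy hu hd1
  have hx := x_eq_zero hQ h2 he hy hu hw
  exact ⟨hx, hy, hu, v_eq_zero hQ he hx hy hu hw, hw⟩

end QuadraticHoppingInvariant

theorem ZMod.two_ne_zero_of_odd {p : ℕ} [Fact p.Prime] (hp : Odd p) : (2 : ZMod p) ≠ 0 :=
  Ring.two_ne_zero ((ZMod.ringChar_zmod_n p).symm ▸ hp.ne_two_of_dvd_nat dvd_rfl)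

theorem stmt_13_general (p : ℕ) [Fact p.Prime] (hp : Odd p)
    (c e d f₀ : ZMod p) (he : e ≠ 0) (hd : d ^ 2 ≠ 1)
    (x y u v w z : ZMod p)
    (hQ : ∀ i j : ZMod p,
      x * (i + e) ^ 2 + y * (c * i + d * j + f₀) ^ 2
        + u * (i + e) * (c * i + d * j + f₀)
        + v * (i + e) + w * (c * i + d * j + f₀) + z
      = x * i ^ 2 + y * j ^ 2 + u * i * j + v * i + w * j + z) :
    x = 0 ∧ y = 0 ∧ u = 0 ∧ v = 0 ∧ w = 0 :=
  QuadraticHoppingInvariant.coeffs_eq_zero hQ (ZMod.two_ne_zero_of_odd hp) he hd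

/-- When `d² ≠ 1`, the affine map `(i,j) ↦ (i + e, c·i + d·j + f₀)` on
`(ZMod p)²` (with `p` an odd prime, `c ≠ 0`, `e ≠ 0`) admits no nonconstant
quadratic hopping invariant. -/
theorem stmt_13 (p : ℕ) [Fact p.Prime] (hp : Odd p)
    (c e d f₀ : ZMod p) (hc : c ≠ 0) (he : e ≠ 0) (hd : d ^ 2 ≠ 1)
    (x y u v w z : ZMod p)
    (hQ : ∀ i j : ZMod p,
      x * (i + e) ^ 2 + y * (c * i + d * j + f₀) ^ 2
        + u * (i + e) * (c * i + d * j + f₀)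
        + v * (i + e) + w * (c * i + d * j + f₀) + z
      = x * i ^ 2 + y * j ^ 2 + u * i * j + v * i + w * j + z) :
    x = 0 ∧ y = 0 ∧ u = 0 ∧ v = 0 ∧ w = 0 :=
  stmt_13_general p hp c e d f₀ he hd x y u v w z hQ
end
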